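/- arXiv:1702.08119 — 2 statements merged into one kernel-verified Lean document; each statement's English description precedes it below -/
import Mathlib

section
/- Let T and U be trees, let v be simultaneously a leaf of T and the root of U. Then the pushout (as pre-broad posets) T ⨿_v U of the span T ← η → U, where η is the one-edge tree mapping to v in both T and U, is again a tree. Its broad relations are exactly: (i) relations of T, (ii) relations of U, and (iii) relations t̲ u̲ ≤ t for which t̲ v ≤ t in T and u̲ ≤ v in U. -/
universe u

namespace BroadPaper

/-- A broad relation on `X`: a relation between finite unordered tuples
(multisets) over `X` and elements of `X`. -/
abbrev Rel (X : Type u) : Type u := Multiset X → X → Prop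

variable {X : Type u} {Y : Type u} {A : Type u} {B : Type u} {Z : Type u}

/-- Broad transitivity: if `f₁ ⋯ fₙ ≤ e` and `g̲ᵢ ≤ fᵢ` then `g̲₁ ⋯ g̲ₙ ≤ e`,
encoded via a multiset of pairs `(g̲ᵢ, fᵢ)`. -/
def BTrans (r : Rel X) : Prop :=
  ∀ (p : Multiset (Multiset X × X)) (e : X),
    r (p.map Prod.snd) e → (∀ q ∈ p, r q.1 q.2) → r ((p.map Prod.fst).sum) e

/-- A pre-broad poset: reflexivity plus broad transitivity. -/
def IsPreBroad (r : Rel X) : Prop := (∀ e : X, r {e} e) ∧ BTrans r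

/-- A (commutative) broad poset: a pre-broad poset satisfying antisymmetry. -/
def IsBroad (r : Rel X) : Prop :=
  IsPreBroad r ∧ ∀ e f : X, r {e} f → r {f} e → e = f

/-- Simplicity: letters in any broad relation are pairwise distinct. -/
def Simple (r : Rel X) : Prop := ∀ fs e, r fs e → fs.Nodup

/-- The descendant relation `f ≤_d e`. -/
def descends (r : Rel X) (f e : X) : Prop := ∃ fs, r fs e ∧ f ∈ fs

def Comparable (r : Rel X) (f g : X) : Prop := descends r f g ∨ descends r g f

def Incomp (r : Rel X) (f g : X) : Prop := ¬ descends r f g ∧ ¬ descends r g f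

/-- Blockwise extension of a broad relation to a relation between tuples:
`fs ≤ es` iff `fs = f̲₁ ⋯ f̲ₖ`, `es = e₁ ⋯ eₖ` with `f̲ᵢ ≤ eᵢ`. -/
def tupleLE (r : Rel X) (fs es : Multiset X) : Prop :=
  ∃ p : Multiset (Multiset X × X),
    p.map Prod.snd = es ∧ (p.map Prod.fst).sum = fs ∧ ∀ q ∈ p, r q.1 q.2

/-- A leaf: no tuple strictly below `e`. -/
def IsLeaf (r : Rel X) (e : X) : Prop := ¬ ∃ fs, r fs e ∧ fs ≠ ({e} : Multiset X)

/-- `fs` is the maximum tuple strictly below `e` (written `e^↑`).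
If `fs ≠ 0`, `e` is a node; if `fs = 0`, `e` is a stump. -/
def upTuple (r : Rel X) (e : X) (fs : Multiset X) : Prop :=
  (r fs e ∧ fs ≠ ({e} : Multiset X)) ∧
    ∀ gs, r gs e → gs ≠ ({e} : Multiset X) → tupleLE r gs fs

def IsStump (r : Rel X) (e : X) : Prop := upTuple r e 0

/-- A dendroidally ordered set (tree): a finite simple broad poset in which
every element is a leaf, node or stump, with a `≤_d`-maximum (root). -/
def IsTree (r : Rel X) : Prop :=
  IsBroad r ∧ Finite X ∧ Simple r ∧
    (∀ e : X, IsLeaf r e ∨ ∃ fs, upTuple r e fs) ∧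
    ∃ rt : X, ∀ e, descends r e rt

def IsMaxEl (r : Rel X) (e : X) : Prop := ∀ s, descends r e s → s = e

/-- A forestially ordered set (forest): each element has a unique
`≤_d`-maximal element above it. -/
def IsForest (r : Rel X) : Prop :=
  IsBroad r ∧ Finite X ∧ Simple r ∧
    (∀ e : X, IsLeaf r e ∨ ∃ fs, upTuple r e fs) ∧
    ∀ e : X, ∃! rt : X, IsMaxEl r rt ∧ descends r e rt

/-- A map of broad posets: preserves broad relations (letterwise on tuples). -/
def BroadHom (r : Rel X) (r' : Rel Y) (φ : X → Y) : Prop :=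
  ∀ fs e, r fs e → r' (fs.map φ) (φ e)

/-- `rs` is the root tuple: the tuple of `≤_d`-maximal elements (no repeats). -/
def IsRootTuple (r : Rel X) (rs : Multiset X) : Prop :=
  rs.Nodup ∧ ∀ x, x ∈ rs ↔ IsMaxEl r x

/-- Independent map of forests: `φ(r̲_F)·e̲ ≤ r̲_{F'}` for some tuple `e̲`. -/
def Independent (r : Rel X) (r' : Rel Y) (φ : X → Y) : Prop :=
  ∃ (rs : Multiset X) (rs' : Multiset Y) (es : Multiset Y),
    IsRootTuple r rs ∧ IsRootTuple r' rs' ∧ tupleLE r' (rs.map φ + es) rs'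

/-- The (pre-)broad relation generated by a set of generating relations:
closure under reflexivity and broad transitivity. -/
inductive GenRel (gen : Rel X) : Rel X
  | of : ∀ fs e, gen fs e → GenRel gen fs e
  | refl : ∀ e, GenRel gen {e} e
  | btrans : ∀ (p : Multiset (Multiset X × X)) (e : X),
      GenRel gen (p.map Prod.snd) e → (∀ q ∈ p, GenRel gen q.1 q.2) →
      GenRel gen ((p.map Prod.fst).sum) e

/-- Generators of the tensor product `S ⊗ T`: relations `s̲ × t ≤ (s,t)` and
`s × t̲ ≤ (s,t)`. -/
def tensorGen (rS : Rel A) (rT : Rel B) : Rel (A × B) := fun xs x =>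
  (∃ as, rS as x.1 ∧ xs = as.map fun a => (a, x.2)) ∨
  (∃ bs, rT bs x.2 ∧ xs = bs.map fun b => (x.1, b))

/-- The tensor product broad relation on `A × B`. -/
def tensorRel (rS : Rel A) (rT : Rel B) : Rel (A × B) := GenRel (tensorGen rS rT)

/-- Product of tuples: all pairs from `as` and `bs`. -/
def mprod (as : Multiset A) (bs : Multiset B) : Multiset (A × B) :=
  as.bind fun a => bs.map fun b => (a, b)

end BroadPaper

namespace BroadPaper

/-- The underlying set of the grafting `T ⨿_v U`: the pushout of sets. -/
abbrev GraftSet (A B : Type u) (vU : B) : Type u := A ⊕ {b : B // b ≠ vU}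

/-- The canonical map `U → T ⨿_v U`, sending the root `vU` of `U` to the
leaf `vT` of `T`. -/
noncomputable def iotaU {A B : Type u} (vT : A) (vU : B) (b : B) :
    GraftSet A B vU :=
  haveI := Classical.dec (b = vU)
  if h : b = vU then Sum.inl vT else Sum.inr ⟨b, h⟩

/-- The grafting relation: (i) relations of `T`, (ii) relations of `U`, and
(iii) composites `t̲ u̲ ≤ t` with `t̲ v ≤ t` in `T` and `u̲ ≤ v` in `U`. -/
def graftRel {A B : Type u} (rT : Rel A) (rU : Rel B) (vT : A) (vU : B) :
    Rel (GraftSet A B vU) := fun xs x =>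
  (∃ ts t, rT ts t ∧ xs = ts.map Sum.inl ∧ x = Sum.inl t) ∨
  (∃ us u, rU us u ∧ xs = us.map (iotaU vT vU) ∧ x = iotaU vT vU u) ∨
  (∃ ts t us, rT (vT ::ₘ ts) t ∧ rU us vU ∧
    xs = ts.map Sum.inl + us.map (iotaU vT vU) ∧ x = Sum.inl t)

/-!
Because `vT` is a leaf of `T`, every relation of the grafting with target in `U` is the image of
a relation of `U`, while a relation with target `t` in `T` is either a relation of `T` or splits
as `ss us ≤ t` with `vT ss ≤ t` in `T` and `us ≤ vU` in `U`. Composing relations of these shapes,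
each mixed input contributes one copy of `vT` to a composite relation of `T`; simplicity of `T`
allows at most one copy (none if `vT` is already an input), so the composite is again of one of
the three kinds. Leaves, nodes and stumps are inherited from `T` and `U`, and the root of `T`
remains the root. A map out of the grafting is determined by its restrictions to `T` and `U`; it
preserves the mixed relations by a single composition at `vT`.
-/

section BroadPosets

variable {r : Rel X}

lemma tupleLE_zero : tupleLE r 0 0 := ⟨0, rfl, rfl, by simp⟩

lemma eq_zero_of_tupleLE_zero {fs : Multiset X} (h : tupleLE r fs 0) : fs = 0 := by
  obtain ⟨p, hsnd, rfl, -⟩ := h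
  simp [Multiset.map_eq_zero.mp hsnd]

lemma tupleLE_cons {gs fs es : Multiset X} {a : X} (hg : r gs a) (h : tupleLE r fs es) :
    tupleLE r (gs + fs) (a ::ₘ es) := by
  obtain ⟨p, rfl, rfl, hp⟩ := h
  refine ⟨(gs, a) ::ₘ p, by simp, by simp, ?_⟩
  rintro q hq
  rcases Multiset.mem_cons.mp hq with rfl | hq
  exacts [hg, hp q hq]

lemma exists_of_tupleLE_cons {xs es : Multiset X} {a : X} (h : tupleLE r xs (a ::ₘ es)) :
    ∃ gs fs, xs = gs + fs ∧ r gs a ∧ tupleLE r fs es := by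
  obtain ⟨p, hsnd, rfl, hp⟩ := h
  have ha : a ∈ p.map Prod.snd := by rw [hsnd]; exact Multiset.mem_cons_self a es
  obtain ⟨q, hq, rfl⟩ := Multiset.mem_map.mp ha
  obtain ⟨p', rfl⟩ := Multiset.exists_cons_of_mem hq
  rw [Multiset.map_cons] at hsnd
  exact ⟨q.1, _, by simp, hp q hq, p', (Multiset.cons_inj_right _).mp hsnd, rfl,
    fun q' hq' => hp q' (Multiset.mem_cons_of_mem hq')⟩

lemma exists_of_tupleLE_add {xs es₁ es₂ : Multiset X} (h : tupleLE r xs (es₁ + es₂)) :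
    ∃ xs₁ xs₂, xs = xs₁ + xs₂ ∧ tupleLE r xs₁ es₁ ∧ tupleLE r xs₂ es₂ := by
  induction es₁ using Multiset.induction generalizing xs with
  | empty => exact ⟨0, xs, by simp, tupleLE_zero, by simpa using h⟩
  | cons a es ih =>
    rw [Multiset.cons_add] at h
    obtain ⟨gs, fs, rfl, hg, hf⟩ := exists_of_tupleLE_cons h
    obtain ⟨xs₁, xs₂, rfl, h₁, h₂⟩ := ih hf
    exact ⟨gs + xs₁, xs₂, (add_assoc _ _ _).symm, tupleLE_cons hg h₁, h₂⟩

lemma tupleLE_refl (hr : ∀ e, r {e} e) (es : Multiset X) : tupleLE r es es := by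
  induction es using Multiset.induction with
  | empty => exact tupleLE_zero
  | cons a es ih => simpa [Multiset.singleton_add] using tupleLE_cons (hr a) ih

lemma tupleLE.map {r' : Rel Y} {φ : X → Y} (hφ : BroadHom r r' φ) {fs es : Multiset X}
    (h : tupleLE r fs es) : tupleLE r' (fs.map φ) (es.map φ) := by
  induction es using Multiset.induction generalizing fs with
  | empty => simp [eq_zero_of_tupleLE_zero h, tupleLE_zero]
  | cons a es ih =>
    obtain ⟨gs, fs, rfl, hg, hf⟩ := exists_of_tupleLE_cons h
    simpa using tupleLE_cons (hφ _ _ hg) (ih hf)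

lemma bTrans_of_tupleLE (h : ∀ xs es e, r es e → tupleLE r xs es → r xs e) : BTrans r :=
  fun p e he hp => h _ _ e he ⟨p, rfl, rfl, hp⟩

lemma IsPreBroad.trans (hr : IsPreBroad r) {xs es : Multiset X} {e : X} (he : r es e)
    (h : tupleLE r xs es) : r xs e := by
  obtain ⟨p, rfl, rfl, hp⟩ := h
  exact hr.2 p e he hp

lemma IsPreBroad.subst (hr : IsPreBroad r) {fs gs : Multiset X} {a e : X}
    (h : r (a ::ₘ fs) e) (hg : r gs a) : r (gs + fs) e :=
  hr.trans h (tupleLE_cons hg (tupleLE_refl hr.1 fs))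

lemma IsLeaf.eq_singleton {e : X} (h : IsLeaf r e) {fs : Multiset X} (hfs : r fs e) :
    fs = {e} :=
  not_not.mp fun hne => h ⟨fs, hfs, hne⟩

lemma IsPreBroad.eq_singleton_of_mem (hr : IsPreBroad r) (hs : Simple r) {fs : Multiset X}
    {e : X} (h : r fs e) (he : e ∈ fs) : fs = {e} := by
  obtain ⟨rest, rfl⟩ := Multiset.exists_cons_of_mem he
  -- substituting the relation into its own input `e` repeats every other input
  have hnd := Multiset.nodup_add.mp (hs _ _ (hr.subst h h))
  have hrest : rest = 0 := Multiset.eq_zero_of_forall_notMem fun x hx =>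
    Multiset.disjoint_left.mp hnd.2.2 (Multiset.mem_cons_of_mem hx) hx
  simp [hrest]

lemma IsBroad.eq_of_descends (hr : IsBroad r) (hs : Simple r) {a b : X}
    (hab : descends r a b) (hba : descends r b a) : a = b := by
  obtain ⟨fs, hfs, ha⟩ := hab
  obtain ⟨gs, hgs, hb⟩ := hba
  obtain ⟨gs', rfl⟩ := Multiset.exists_cons_of_mem hb
  have hsum := hr.1.eq_singleton_of_mem hs (hr.1.subst hgs hfs) (Multiset.mem_add.mpr (Or.inl ha))
  have hcard := congrArg Multiset.card hsum
  have hfs_pos := Multiset.card_pos_iff_exists_mem.mpr ⟨a, ha⟩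
  have hgs' : gs' = 0 := Multiset.card_eq_zero.mp (by simp at hcard; omega)
  subst hgs'
  have hfs1 : fs = {a} := by simpa using hsum
  subst hfs1
  exact hr.2 a b hfs hgs

lemma IsLeaf.map_of_full {r' : Rel Y} {φ : X → Y} {u : X}
    (hfull : ∀ gs, r' gs (φ u) → ∃ ws, gs = ws.map φ ∧ r ws u) (h : IsLeaf r u) :
    IsLeaf r' (φ u) := by
  rintro ⟨gs, hgs, hne⟩
  obtain ⟨ws, rfl, hws⟩ := hfull gs hgs
  simp [h.eq_singleton hws] at hne

lemma upTuple.map_of_full {r' : Rel Y} {φ : X → Y} (hφ : Function.Injective φ)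
    (hhom : BroadHom r r' φ) {u : X} (hfull : ∀ gs, r' gs (φ u) → ∃ ws, gs = ws.map φ ∧ r ws u)
    {fs : Multiset X} (h : upTuple r u fs) : upTuple r' (φ u) (fs.map φ) := by
  refine ⟨⟨hhom _ _ h.1.1, fun he => h.1.2 (Multiset.map_injective hφ (by simpa using he))⟩, ?_⟩
  intro gs hgs hne
  obtain ⟨ws, rfl, hws⟩ := hfull gs hgs
  exact (h.2 ws hws (by rintro rfl; simp at hne)).map hhom

end BroadPosets

section Grafting

variable {rT : Rel A} {rU : Rel B} {vT : A} {vU : B}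

lemma iotaU_self : iotaU vT vU vU = Sum.inl vT := dif_pos rfl

lemma iotaU_of_ne {b : B} (h : b ≠ vU) : iotaU vT vU b = Sum.inr ⟨b, h⟩ := dif_neg h

lemma iotaU_val (b : {b : B // b ≠ vU}) : iotaU vT vU b.1 = Sum.inr b := iotaU_of_ne b.2

lemma iotaU_eq_inl {b : B} {a : A} (h : iotaU vT vU b = Sum.inl a) : b = vU ∧ a = vT := by
  by_cases hb : b = vU
  · subst hb
    exact ⟨rfl, (Sum.inl.inj (iotaU_self.symm.trans h)).symm⟩
  · simp [iotaU_of_ne hb] at h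

lemma iotaU_injective : Function.Injective (iotaU vT vU) := by
  intro b b' h
  by_cases hb : b = vU <;> by_cases hb' : b' = vU
  · rw [hb, hb']
  · simp [hb, iotaU_self, iotaU_of_ne hb'] at h
  · simp [hb', iotaU_self, iotaU_of_ne hb] at h
  · simpa [iotaU_of_ne hb, iotaU_of_ne hb'] using h

lemma broadHom_inl : BroadHom rT (graftRel rT rU vT vU) Sum.inl :=
  fun _ _ h => Or.inl ⟨_, _, h, rfl, rfl⟩

lemma broadHom_iotaU : BroadHom rU (graftRel rT rU vT vU) (iotaU vT vU) :=
  fun _ _ h => Or.inr (Or.inl ⟨_, _, h, rfl, rfl⟩)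

lemma graftRel_mixed {ts : Multiset A} {us : Multiset B} {t : A} (ht : rT (vT ::ₘ ts) t) (hu : rU us vU) :
    graftRel rT rU vT vU (ts.map Sum.inl + us.map (iotaU vT vU)) (Sum.inl t) :=
  Or.inr (Or.inr ⟨ts, t, us, ht, hu, rfl, rfl⟩)

lemma exists_of_graftRel_inl (hvT : rT {vT} vT) {xs : Multiset (GraftSet A B vU)} {t : A}
    (h : graftRel rT rU vT vU xs (Sum.inl t)) :
    ∃ ss us, xs = ss.map Sum.inl + us.map (iotaU vT vU) ∧
      ((us = 0 ∧ rT ss t) ∨ (rT (vT ::ₘ ss) t ∧ rU us vU)) := by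
  rcases h with ⟨ts, t', h, rfl, ht⟩ | ⟨us, u, h, rfl, hu⟩ | ⟨ts, t', us, h, hu, rfl, ht⟩
  · exact ⟨ts, 0, by simp, Or.inl ⟨rfl, Sum.inl.inj ht ▸ h⟩⟩
  · obtain ⟨rfl, rfl⟩ := iotaU_eq_inl hu.symm
    exact ⟨0, us, by simp, Or.inr ⟨hvT, h⟩⟩
  · exact ⟨ts, us, rfl, Or.inr ⟨Sum.inl.inj ht ▸ h, hu⟩⟩

lemma exists_of_graftRel_iotaU (hleaf : IsLeaf rT vT) (hvU : rU {vU} vU)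
    {xs : Multiset (GraftSet A B vU)} {u : B} (h : graftRel rT rU vT vU xs (iotaU vT vU u)) :
    ∃ ws, xs = ws.map (iotaU vT vU) ∧ rU ws u := by
  rcases h with ⟨ts, t, h, rfl, ht⟩ | ⟨us, u', h, rfl, hu⟩ | ⟨ts, t, us, h, hu, rfl, ht⟩
  · obtain ⟨hu, htv⟩ := iotaU_eq_inl ht
    rw [htv] at h
    rw [hu]
    exact ⟨{vU}, by simp [hleaf.eq_singleton h, iotaU_self], hvU⟩
  · exact ⟨us, rfl, iotaU_injective hu ▸ h⟩
  · obtain ⟨rfl, htv⟩ := iotaU_eq_inl ht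
    rw [htv] at h
    have hts : ts = 0 :=
      (Multiset.cons_inj_right vT).mp ((hleaf.eq_singleton h).trans (Multiset.cons_zero vT).symm)
    exact ⟨us, by simp [hts], hu⟩

lemma exists_of_tupleLE_graftRel_inl (hvT : rT {vT} vT) {xs : Multiset (GraftSet A B vU)}
    {ts : Multiset A} (h : tupleLE (graftRel rT rU vT vU) xs (ts.map Sum.inl)) :
    ∃ SS USs, tupleLE rT (Multiset.replicate (Multiset.card USs) vT + SS) ts ∧
      (∀ us ∈ USs, rU us vU) ∧ xs = SS.map Sum.inl + USs.sum.map (iotaU vT vU) := by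
  induction ts using Multiset.induction generalizing xs with
  | empty => exact ⟨0, 0, by simpa using tupleLE_zero, by simp, by simpa using eq_zero_of_tupleLE_zero h⟩
  | cons t ts ih =>
    rw [Multiset.map_cons] at h
    obtain ⟨gs, fs, rfl, hg, hf⟩ := exists_of_tupleLE_cons h
    obtain ⟨SS, USs, hSS, hUSs, rfl⟩ := ih hf
    obtain ⟨ss, us, rfl, ⟨rfl, hss⟩ | ⟨hss, hus⟩⟩ := exists_of_graftRel_inl hvT hg
    · refine ⟨ss + SS, USs, ?_, hUSs, ?_⟩
      · convert tupleLE_cons hss hSS using 1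
        abel
      · simp only [Multiset.map_add, Multiset.map_zero]
        abel
    · refine ⟨ss + SS, us ::ₘ USs, ?_, ?_, ?_⟩
      · convert tupleLE_cons hss hSS using 1
        rw [Multiset.card_cons, Multiset.replicate_succ]
        simp only [← Multiset.singleton_add]
        abel
      · simpa [hus] using hUSs
      · simp only [Multiset.sum_cons, Multiset.map_add]
        abel

lemma exists_of_tupleLE_graftRel_iotaU (hleaf : IsLeaf rT vT) (hvU : rU {vU} vU)
    {xs : Multiset (GraftSet A B vU)} {us : Multiset B}
    (h : tupleLE (graftRel rT rU vT vU) xs (us.map (iotaU vT vU))) :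
    ∃ ws, xs = ws.map (iotaU vT vU) ∧ tupleLE rU ws us := by
  induction us using Multiset.induction generalizing xs with
  | empty => exact ⟨0, by simpa using eq_zero_of_tupleLE_zero h, tupleLE_zero⟩
  | cons u us ih =>
    rw [Multiset.map_cons] at h
    obtain ⟨gs, fs, rfl, hg, hf⟩ := exists_of_tupleLE_cons h
    obtain ⟨ws, rfl, hws⟩ := ih hf
    obtain ⟨vs, rfl, hvs⟩ := exists_of_graftRel_iotaU hleaf hvU hg
    exact ⟨vs + ws, by simp, tupleLE_cons hvs hws⟩

lemma graftRel_refl (hT : ∀ e, rT {e} e) (hU : ∀ e, rU {e} e) (x : GraftSet A B vU) :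
    graftRel rT rU vT vU {x} x := by
  rcases x with a | b
  · simpa using broadHom_inl _ _ (hT a)
  · simpa [iotaU_val] using broadHom_iotaU (rT := rT) (vT := vT) (vU := vU) _ _ (hU b.1)

lemma graftRel_bTrans (hT : IsPreBroad rT) (hU : IsPreBroad rU) (hTs : Simple rT)
    (hleaf : IsLeaf rT vT) : BTrans (graftRel rT rU vT vU) := by
  classical
  refine bTrans_of_tupleLE fun xs es e he h => ?_
  rcases he with ⟨ts, t, ht, rfl, rfl⟩ | ⟨us, u, hu, rfl, rfl⟩ | ⟨ts, t, us, ht, hu, rfl, rfl⟩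
  · obtain ⟨SS, USs, hSS, hUSs, rfl⟩ := exists_of_tupleLE_graftRel_inl (hT.1 vT) h
    have hrel := hT.trans ht hSS
    have hcount := Multiset.nodup_iff_count_le_one.mp (hTs _ _ hrel) vT
    rw [Multiset.count_add, Multiset.count_replicate_self] at hcount
    rcases Nat.le_one_iff_eq_zero_or_eq_one.mp (show Multiset.card USs ≤ 1 by omega) with h0 | h1
    · rw [Multiset.card_eq_zero.mp h0] at hrel ⊢
      simpa using broadHom_inl _ _ (by simpa using hrel)
    · obtain ⟨us, rfl⟩ := Multiset.card_eq_one.mp h1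
      simpa using graftRel_mixed (by simpa using hrel) (hUSs us (Multiset.mem_singleton_self us))
  · obtain ⟨ws, rfl, hws⟩ := exists_of_tupleLE_graftRel_iotaU hleaf (hU.1 vU) h
    exact broadHom_iotaU _ _ (hU.trans hu hws)
  · obtain ⟨xs₁, xs₂, rfl, h₁, h₂⟩ := exists_of_tupleLE_add h
    obtain ⟨SS, USs, hSS, -, rfl⟩ := exists_of_tupleLE_graftRel_inl (hT.1 vT) h₁
    obtain ⟨ws, rfl, hws⟩ := exists_of_tupleLE_graftRel_iotaU hleaf (hU.1 vU) h₂
    have hrel := hT.trans ht (tupleLE_cons (hT.1 vT) hSS)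
    have hcount := Multiset.nodup_iff_count_le_one.mp (hTs _ _ hrel) vT
    rw [Multiset.count_add, Multiset.count_add, Multiset.count_singleton_self,
      Multiset.count_replicate_self] at hcount
    rw [Multiset.card_eq_zero.mp (show Multiset.card USs = 0 by omega)] at hrel ⊢
    simpa using graftRel_mixed (by simpa [Multiset.singleton_add] using hrel) (hU.trans hu hws)

lemma graftRel_isPreBroad (hT : IsPreBroad rT) (hU : IsPreBroad rU) (hTs : Simple rT)
    (hleaf : IsLeaf rT vT) : IsPreBroad (graftRel rT rU vT vU) :=
  ⟨graftRel_refl hT.1 hU.1, graftRel_bTrans hT hU hTs hleaf⟩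

lemma descends_of_graftRel_singleton_inl (hvT : rT {vT} vT) {a b : A}
    (h : graftRel rT rU vT vU {Sum.inl a} (Sum.inl b)) : descends rT a b := by
  obtain ⟨ss, us, hxs, hcase⟩ := exists_of_graftRel_inl hvT h
  have hmem : Sum.inl a ∈ ss.map Sum.inl + us.map (iotaU vT vU) := by
    rw [← hxs]; exact Multiset.mem_singleton_self _
  rcases hcase with ⟨rfl, hss⟩ | ⟨hss, -⟩
  · exact ⟨ss, hss, by simpa using hmem⟩
  · refine ⟨_, hss, ?_⟩
    rcases Multiset.mem_add.mp hmem with ha | ha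
    · exact Multiset.mem_cons_of_mem (by simpa using ha)
    · obtain ⟨w, -, hw⟩ := Multiset.mem_map.mp ha
      rw [(iotaU_eq_inl hw).2]
      exact Multiset.mem_cons_self _ _

lemma exists_of_graftRel_singleton_iotaU (hleaf : IsLeaf rT vT) (hvU : rU {vU} vU)
    {x : GraftSet A B vU} {u : B} (h : graftRel rT rU vT vU {x} (iotaU vT vU u)) :
    ∃ w, x = iotaU vT vU w ∧ rU {w} u := by
  obtain ⟨ws, hws, hrel⟩ := exists_of_graftRel_iotaU hleaf hvU h
  obtain ⟨w, rfl, hw⟩ := Multiset.map_eq_singleton.mp hws.symm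
  exact ⟨w, hw.symm, hrel⟩

lemma graftRel_antisymm (hT : IsBroad rT) (hTs : Simple rT) (hU : IsBroad rU)
    (hleaf : IsLeaf rT vT) (x y : GraftSet A B vU) (hxy : graftRel rT rU vT vU {x} y)
    (hyx : graftRel rT rU vT vU {y} x) : x = y := by
  have hiota : ∀ w u, graftRel rT rU vT vU {iotaU vT vU w} (iotaU vT vU u) →
      graftRel rT rU vT vU {iotaU vT vU u} (iotaU vT vU w) → iotaU vT vU w = iotaU vT vU u := by
    intro w u hwu huw
    obtain ⟨w', hw', hwu⟩ := exists_of_graftRel_singleton_iotaU hleaf (hU.1.1 vU) hwu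
    obtain ⟨u', hu', huw⟩ := exists_of_graftRel_singleton_iotaU hleaf (hU.1.1 vU) huw
    rw [← iotaU_injective hw'] at hwu
    rw [← iotaU_injective hu'] at huw
    exact congrArg _ (hU.2 _ _ hwu huw)
  rcases y with b | b
  · rcases x with a | c
    · exact congrArg Sum.inl (hT.eq_of_descends hTs
        (descends_of_graftRel_singleton_inl (hT.1.1 vT) hxy)
        (descends_of_graftRel_singleton_inl (hT.1.1 vT) hyx))
    · rw [← iotaU_val c] at hxy hyx ⊢
      obtain ⟨u, hu, -⟩ := exists_of_graftRel_singleton_iotaU hleaf (hU.1.1 vU) hyx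
      rw [hu] at hxy hyx ⊢
      exact hiota _ _ hxy hyx
  · rw [← iotaU_val b] at hxy hyx ⊢
    obtain ⟨w, rfl, -⟩ := exists_of_graftRel_singleton_iotaU hleaf (hU.1.1 vU) hxy
    exact hiota _ _ hxy hyx

lemma graftRel_simple (hTs : Simple rT) (hUs : Simple rU) : Simple (graftRel rT rU vT vU) := by
  rintro xs x (⟨ts, t, h, rfl, -⟩ | ⟨us, u, h, rfl, -⟩ | ⟨ts, t, us, ht, hu, rfl, -⟩)
  · exact (hTs _ _ h).map Sum.inl_injective
  · exact (hUs _ _ h).map iotaU_injective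
  · obtain ⟨hvT, hts⟩ := Multiset.nodup_cons.mp (hTs _ _ ht)
    refine Multiset.nodup_add.mpr ⟨hts.map Sum.inl_injective, (hUs _ _ hu).map iotaU_injective,
      Multiset.disjoint_left.mpr fun hx₁ hx₂ => ?_⟩
    obtain ⟨s, hs, rfl⟩ := Multiset.mem_map.mp hx₁
    obtain ⟨w, -, hw⟩ := Multiset.mem_map.mp hx₂
    exact hvT ((iotaU_eq_inl hw).2 ▸ hs)

lemma graftRel_root (hT : ∃ rt, ∀ e, descends rT e rt) (hU : ∀ e, descends rU e vU) :
    ∃ rt, ∀ x, descends (graftRel rT rU vT vU) x rt := by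
  obtain ⟨rt, hrt⟩ := hT
  refine ⟨Sum.inl rt, fun x => ?_⟩
  rcases x with a | b
  · obtain ⟨ts, hts, ha⟩ := hrt a
    exact ⟨_, broadHom_inl _ _ hts, Multiset.mem_map_of_mem _ ha⟩
  · obtain ⟨us, hus, hb⟩ := hU b.1
    obtain ⟨ts, hts, hv⟩ := hrt vT
    obtain ⟨ts', rfl⟩ := Multiset.exists_cons_of_mem hv
    refine ⟨_, graftRel_mixed hts hus, Multiset.mem_add.mpr (Or.inr ?_)⟩
    rw [← iotaU_val b]
    exact Multiset.mem_map_of_mem _ hb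

lemma tupleLE_graftRel_mixed {ss : Multiset A} {es : Multiset A} {us : Multiset B}
    (h : tupleLE rT (vT ::ₘ ss) es) (hus : rU us vU) :
    tupleLE (graftRel rT rU vT vU) (ss.map Sum.inl + us.map (iotaU vT vU)) (es.map Sum.inl) := by
  induction es using Multiset.induction generalizing ss with
  | empty => exact absurd (eq_zero_of_tupleLE_zero h) Multiset.cons_ne_zero
  | cons a es ih =>
    obtain ⟨gs, fs, hsplit, hg, hf⟩ := exists_of_tupleLE_cons h
    have hv : vT ∈ gs + fs := hsplit ▸ Multiset.mem_cons_self vT ss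
    rw [Multiset.map_cons]
    rcases Multiset.mem_add.mp hv with hv | hv
    · obtain ⟨gs', rfl⟩ := Multiset.exists_cons_of_mem hv
      obtain rfl : ss = gs' + fs := by simpa using hsplit
      convert tupleLE_cons (graftRel_mixed hg hus) (hf.map broadHom_inl) using 1
      simp only [Multiset.map_add]
      abel
    · obtain ⟨fs', rfl⟩ := Multiset.exists_cons_of_mem hv
      obtain rfl : ss = gs + fs' := by simpa [Multiset.add_cons] using hsplit
      convert tupleLE_cons (broadHom_inl _ _ hg) (ih hf) using 1
      simp only [Multiset.map_add]
      abel

lemma isLeaf_graftRel_inl (hvT : rT {vT} vT) {t : A} (ht : t ≠ vT) (h : IsLeaf rT t) :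
    IsLeaf (graftRel rT rU vT vU) (Sum.inl t) := by
  rintro ⟨xs, hxs, hne⟩
  obtain ⟨ss, us, rfl, ⟨rfl, hss⟩ | ⟨hss, -⟩⟩ := exists_of_graftRel_inl hvT hxs
  · simp [h.eq_singleton hss] at hne
  · have hv := h.eq_singleton hss ▸ Multiset.mem_cons_self vT ss
    exact ht (Multiset.mem_singleton.mp hv).symm

-- A relation `ss us ≤ t` of the third kind is dominated by `t↑` through the block of `t↑`
-- that contains `vT` in `ss vT ≤ t↑`.
lemma upTuple_graftRel_inl (hvT : rT {vT} vT) {t : A} (ht : t ≠ vT) {fs : Multiset A}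
    (h : upTuple rT t fs) : upTuple (graftRel rT rU vT vU) (Sum.inl t) (fs.map Sum.inl) := by
  refine ⟨⟨broadHom_inl _ _ h.1.1, fun he => h.1.2 ?_⟩, ?_⟩
  · exact Multiset.map_injective Sum.inl_injective (by simpa using he)
  intro xs hxs hne
  obtain ⟨ss, us, rfl, ⟨rfl, hss⟩ | ⟨hss, hus⟩⟩ := exists_of_graftRel_inl hvT hxs
  · simpa using (h.2 ss hss (by rintro rfl; simp at hne)).map broadHom_inl
  · refine tupleLE_graftRel_mixed (h.2 _ hss fun he => ht ?_) hus
    exact (Multiset.mem_singleton.mp (he ▸ Multiset.mem_cons_self vT ss)).symm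

lemma graftRel_isLeaf_or_upTuple (hvT : rT {vT} vT) (hvU : rU {vU} vU) (hleaf : IsLeaf rT vT)
    (hT : ∀ e, IsLeaf rT e ∨ ∃ fs, upTuple rT e fs) (hU : ∀ e, IsLeaf rU e ∨ ∃ fs, upTuple rU e fs)
    (x : GraftSet A B vU) :
    IsLeaf (graftRel rT rU vT vU) x ∨ ∃ fs, upTuple (graftRel rT rU vT vU) x fs := by
  have hiota : ∀ u, IsLeaf (graftRel rT rU vT vU) (iotaU vT vU u) ∨
      ∃ fs, upTuple (graftRel rT rU vT vU) (iotaU vT vU u) fs := by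
    intro u
    have hfull := fun gs => exists_of_graftRel_iotaU (u := u) (xs := gs) hleaf hvU
    exact (hU u).imp (IsLeaf.map_of_full hfull)
      fun ⟨fs, h⟩ => ⟨_, h.map_of_full iotaU_injective broadHom_iotaU hfull⟩
  rcases x with t | b
  · by_cases ht : t = vT
    · rw [ht, ← iotaU_self]
      exact hiota vU
    · exact (hT t).imp (isLeaf_graftRel_inl hvT ht)
        fun ⟨fs, h⟩ => ⟨_, upTuple_graftRel_inl hvT ht h⟩
  · rw [← iotaU_val b]
    exact hiota b.1

lemma graftRel_isTree (hT : IsTree rT) (hU : IsTree rU) (hleaf : IsLeaf rT vT)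
    (hroot : ∀ e, descends rU e vU) : IsTree (graftRel rT rU vT vU) := by
  obtain ⟨hTb, hTfin, hTs, hTcases, hTroot⟩ := hT
  obtain ⟨hUb, hUfin, hUs, hUcases, -⟩ := hU
  exact ⟨⟨graftRel_isPreBroad hTb.1 hUb.1 hTs hleaf, graftRel_antisymm hTb hTs hUb hleaf⟩,
    inferInstance, graftRel_simple hTs hUs,
    graftRel_isLeaf_or_upTuple (hTb.1.1 vT) (hUb.1.1 vU) hleaf hTcases hUcases,
    graftRel_root hTroot hroot⟩

lemma existsUnique_graftRel_lift {a : Rel Y} (ha : IsPreBroad a) {φT : A → Y} {φU : B → Y}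
    (hφT : BroadHom rT a φT) (hφU : BroadHom rU a φU) (hv : φT vT = φU vU) :
    ∃! ψ : GraftSet A B vU → Y,
      BroadHom (graftRel rT rU vT vU) a ψ ∧ ψ ∘ Sum.inl = φT ∧ ψ ∘ iotaU vT vU = φU := by
  set ψ : GraftSet A B vU → Y := Sum.elim φT (fun b => φU b.1)
  have hψU (b : B) : ψ (iotaU vT vU b) = φU b := by
    by_cases hb : b = vU
    · simp [hb, iotaU_self, ψ, hv]
    · simp [iotaU_of_ne hb, ψ]
  refine ⟨ψ, ⟨?_, rfl, funext hψU⟩, fun ψ' ⟨_, hT', hU'⟩ => ?_⟩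
  · rintro xs x (⟨ts, t, h, rfl, rfl⟩ | ⟨us, u, h, rfl, rfl⟩ | ⟨ts, t, us, ht, hu, rfl, rfl⟩)
    · simpa [Multiset.map_map, ψ] using hφT _ _ h
    · simpa [Multiset.map_map, hψU] using hφU _ _ h
    · have hmix := ha.subst (by simpa [hv] using hφT _ _ ht) (hφU _ _ hu)
      simpa [Multiset.map_map, hψU, add_comm, ψ] using hmix
  · funext x
    rcases x with t | b
    · exact congrFun hT' t
    · simpa [iotaU_val, ψ] using congrFun hU' b.1

end Grafting

/-- If `v` is a leaf of the tree `T` and the root of the tree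
`U`, then the grafting (whose broad relations are exactly the three listed
kinds) is again a tree, and it is the pushout `T ⨿_η U` in the category of
pre-broad posets. -/
theorem stmt5 {A B : Type u} (rT : Rel A) (rU : Rel B) (vT : A) (vU : B)
    (hT : IsTree rT) (hU : IsTree rU)
    (hleaf : IsLeaf rT vT) (hroot : ∀ e, descends rU e vU) :
    IsTree (graftRel rT rU vT vU) ∧
    BroadHom rT (graftRel rT rU vT vU) Sum.inl ∧
    BroadHom rU (graftRel rT rU vT vU) (iotaU vT vU) ∧
    (∀ {Y : Type u} (a : Rel Y), IsPreBroad a →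
      ∀ (φT : A → Y) (φU : B → Y), BroadHom rT a φT → BroadHom rU a φU →
        φT vT = φU vU →
        ∃! ψ : GraftSet A B vU → Y,
          BroadHom (graftRel rT rU vT vU) a ψ ∧
            ψ ∘ Sum.inl = φT ∧ ψ ∘ iotaU vT vU = φU) :=
  ⟨graftRel_isTree hT hU hleaf hroot, broadHom_inl, broadHom_iotaU,
    fun _ ha _ _ hφT hφU hv => existsUnique_graftRel_lift ha hφT hφU hv⟩

end BroadPaper
end

section
/- Let T be a tree with root r, and let e̲ = e_1⋯e_n be a tuple of pairwise ≤_d-incomparable edges of T. Then there exists a tuple f̲ such that e̲ f̲ ≤ r is a broad relation in T. Consequently, if e, f ∈ T are ≤_d-incomparable and e' ≤_d e, then e' and f are ≤_d-incomparable. -/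
universe u

/-!
The completion is proved for every `e` above all of `e̲`, by well-founded induction along the
strict descendant order. If `e` is not itself in `e̲`, it is not a leaf, and every member of `e̲`
lies below some letter `u` of the maximum tuple `e^↑ ≤ e`. Choosing such a `u` for each member
splits `e̲` into fibres; each fibre is completed below its `u` by induction, and the completions are
grafted onto `e^↑ ≤ e`.

For the second claim, complete `e f` to `e f g̲ ≤ r` and graft a tuple through `e'` onto `e`:
then `e'` and `f` are distinct letters of a single tuple, which simplicity forbids to be comparable.
-/

theorem Multiset.Pairwise.filter {α : Type*} {R : α → α → Prop} {s : Multiset α}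
    (p : α → Prop) [DecidablePred p] (h : s.Pairwise R) : (s.filter p).Pairwise R := by
  obtain ⟨l, rfl, hl⟩ := h
  exact ⟨l.filter p, by simp, hl.filter p⟩

theorem Multiset.sum_fiberwise_of_mapsTo {α β : Type*} [DecidableEq α] [DecidableEq β]
    {s : Multiset α} {t : Multiset β} (ht : t.Nodup) {σ : α → β} (hσ : ∀ a ∈ s, σ a ∈ t) :
    (t.map fun b => s.filter (σ · = b)).sum = s := by
  ext a
  simp only [Multiset.count_sum, Multiset.count_filter]
  by_cases ha : a ∈ s
  · exact (Finset.sum_ite_eq ⟨t, ht⟩ (σ a) fun _ => s.count a).trans (if_pos (hσ a ha))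
  · simp [Multiset.count_eq_zero.mpr ha]

namespace BroadPaper

section PreBroad

variable {X : Type u} {r : Rel X}

theorem descends_refl (hpb : IsPreBroad r) (e : X) : descends r e e :=
  ⟨{e}, hpb.1 e, Multiset.mem_singleton_self e⟩

theorem IsPreBroad.rel_erase_add [DecidableEq X] (hpb : IsPreBroad r) {gs ks : Multiset X}
    {x b : X} (hgs : r gs x) (hb : b ∈ gs) (hks : r ks b) : r (gs.erase b + ks) x := by
  have h := hpb.2 ((ks, b) ::ₘ (gs.erase b).map fun g => ({g}, g)) x
    (by simpa [Multiset.map_map, Multiset.cons_erase hb] using hgs)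
    (by simpa using ⟨hks, fun g _ => hpb.1 g⟩)
  simpa [Multiset.map_map, add_comm] using h

theorem descends_trans (hpb : IsPreBroad r) {a b c : X} (hab : descends r a b)
    (hbc : descends r b c) : descends r a c := by
  classical
  obtain ⟨ks, hks, haks⟩ := hab
  obtain ⟨gs, hgs, hbgs⟩ := hbc
  exact ⟨gs.erase b + ks, hpb.rel_erase_add hgs hbgs hks, Multiset.mem_add.2 (Or.inr haks)⟩

theorem BTrans.exists_add_rel_of_fiberwise [DecidableEq X] (hbt : BTrans r) {us es : Multiset X}
    {e : X} (hus : r us e) (husnd : us.Nodup) {σ : X → X} (hσ : ∀ a ∈ es, σ a ∈ us)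
    (hfib : ∀ u ∈ us, ∃ fs, r (es.filter (σ · = u) + fs) u) : ∃ fs, r (es + fs) e := by
  choose! f hf using hfib
  have h := hbt (us.map fun u => (es.filter (σ · = u) + f u, u)) e
    (by simpa [Multiset.map_map] using hus) (by simpa using hf)
  refine ⟨(us.map f).sum, ?_⟩
  simpa [Multiset.map_map, Multiset.sum_map_add, Multiset.sum_fiberwise_of_mapsTo husnd hσ]
    using h

end PreBroad

section Simple

variable {X : Type u} {r : Rel X}

theorem disjoint_erase_of_rel [DecidableEq X] (hpb : IsPreBroad r) (hs : Simple r)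
    {gs ks : Multiset X} {x b : X} (hgs : r gs x) (hb : b ∈ gs) (hks : r ks b) :
    Disjoint (gs.erase b) ks :=
  (Multiset.nodup_add.1 (hs _ _ (hpb.rel_erase_add hgs hb hks))).2.2

theorem eq_singleton_of_rel_of_mem (hpb : IsPreBroad r) (hs : Simple r) {gs : Multiset X}
    {x : X} (h : r gs x) (hx : x ∈ gs) : gs = {x} := by
  classical
  have h0 : gs.erase x = 0 :=
    (disjoint_erase_of_rel hpb hs h hx h).eq_bot_of_le (Multiset.erase_le x gs)
  rw [← Multiset.cons_erase hx, h0]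
  rfl

theorem not_descends_of_mem (hpb : IsPreBroad r) (hs : Simple r) {gs : Multiset X} {x a b : X}
    (hgs : r gs x) (ha : a ∈ gs) (hb : b ∈ gs) (hab : a ≠ b) : ¬ descends r a b := by
  classical
  rintro ⟨ks, hks, haks⟩
  exact Multiset.disjoint_left.1 (disjoint_erase_of_rel hpb hs hgs hb hks)
    ((Multiset.mem_erase_of_ne hab).2 ha) haks

theorem descends_antisymm (hb : IsBroad r) (hs : Simple r) {a b : X} (hab : descends r a b)
    (hba : descends r b a) : a = b := by
  classical
  obtain ⟨gs, hgs, hags⟩ := hab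
  obtain ⟨ks, hks, hbks⟩ := hba
  have hgraft := eq_singleton_of_rel_of_mem hb.1 hs (hb.1.rel_erase_add hgs hags hks)
    (Multiset.mem_add.2 (Or.inr hbks))
  have hks1 : ks = {b} :=
    ((Multiset.le_singleton.1 (hgraft ▸ Multiset.le_add_left _ _)).resolve_left
      fun h => by simp [h] at hbks)
  have hgs1 : gs = {a} := by
    have h0 : gs.erase a = 0 := by simpa [hks1] using hgraft
    rw [← Multiset.cons_erase hags, h0]
    rfl
  exact hb.2 a b (hgs1 ▸ hgs) (hks1 ▸ hks)

theorem wellFounded_strictDescends [Finite X] (hb : IsBroad r) (hs : Simple r) :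
    WellFounded fun a b => descends r a b ∧ a ≠ b := by
  have : IsTrans X fun a b => descends r a b ∧ a ≠ b :=
    ⟨fun _ _ _ ⟨hab, _⟩ ⟨hbc, hbc'⟩ => ⟨descends_trans hb.1 hab hbc,
      fun hac => hbc' (descends_antisymm hb hs hbc (hac ▸ hab))⟩⟩
  have : Std.Irrefl fun a b => descends r a b ∧ a ≠ b := ⟨fun _ h => h.2 rfl⟩
  exact Finite.wellFounded_of_trans_of_irrefl _

instance : Std.Symm (Incomp r) := ⟨fun _ _ h => ⟨h.2, h.1⟩⟩

theorem nodup_of_pairwise_incomp (hpb : IsPreBroad r) {es : Multiset X}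
    (hinc : es.Pairwise (Incomp r)) : es.Nodup := by
  obtain ⟨l, rfl, hl⟩ := hinc
  exact Multiset.coe_nodup.2 <| hl.imp fun {a b} (hab : Incomp r a b) (heq : a = b) =>
    hab.1 (heq ▸ descends_refl hpb _)

theorem eq_singleton_of_pairwise_incomp (hpb : IsPreBroad r) {es : Multiset X} {e : X}
    (hinc : es.Pairwise (Incomp r)) (hdes : ∀ a ∈ es, descends r a e) (he : e ∈ es) :
    es = {e} := by
  classical
  have h0 : es.erase e = 0 := Multiset.eq_zero_of_forall_notMem fun a ha => by
    obtain ⟨hae, ha⟩ := ((nodup_of_pairwise_incomp hpb hinc).mem_erase_iff).1 ha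
    exact (hinc.forall ha he hae).1 (hdes a ha)
  rw [← Multiset.cons_erase he, h0]
  rfl

end Simple

section Tree

variable {X : Type u} {r : Rel X}

theorem exists_upTuple_of_descends (hln : ∀ e : X, IsLeaf r e ∨ ∃ fs, upTuple r e fs)
    {a e : X} (hae : descends r a e) (hne : a ≠ e) : ∃ us, upTuple r e us := by
  obtain ⟨gs, hgs, hags⟩ := hae
  refine (hln e).resolve_left fun hleaf => hleaf ⟨gs, hgs, ?_⟩
  rintro rfl
  exact hne (Multiset.mem_singleton.1 hags)

theorem upTuple.exists_descends {e : X} {us : Multiset X} (hup : upTuple r e us) {a : X}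
    (hae : descends r a e) (hne : a ≠ e) : ∃ u ∈ us, descends r a u := by
  obtain ⟨gs, hgs, hags⟩ := hae
  obtain ⟨p, rfl, rfl, hp⟩ :=
    hup.2 gs hgs (by rintro rfl; exact hne (Multiset.mem_singleton.1 hags))
  obtain ⟨q, hq, haq⟩ := Multiset.mem_bind.1 hags
  exact ⟨q.2, Multiset.mem_map_of_mem _ hq, q.1, hp q hq, haq⟩

theorem exists_add_rel_of_pairwise_incomp [Finite X] (hb : IsBroad r) (hs : Simple r)
    (hln : ∀ e : X, IsLeaf r e ∨ ∃ fs, upTuple r e fs) (e : X) {es : Multiset X}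
    (hinc : es.Pairwise (Incomp r)) (hdes : ∀ a ∈ es, descends r a e) :
    ∃ fs, r (es + fs) e := by
  classical
  induction e using (wellFounded_strictDescends hb hs).induction generalizing es with
  | _ e ih =>
  rcases Multiset.empty_or_exists_mem es with rfl | ⟨a, ha⟩
  · exact ⟨{e}, by simpa using hb.1.1 e⟩
  by_cases he : e ∈ es
  · rw [eq_singleton_of_pairwise_incomp hb.1 hinc hdes he]
    exact ⟨0, by simpa using hb.1.1 e⟩
  obtain ⟨us, hup⟩ := exists_upTuple_of_descends hln (hdes a ha) (ne_of_mem_of_not_mem ha he)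
  have hparent : ∀ a ∈ es, ∃ u ∈ us, descends r a u := fun a ha =>
    hup.exists_descends (hdes a ha) (ne_of_mem_of_not_mem ha he)
  choose! σ hσus hσ using hparent
  refine hb.1.2.exists_add_rel_of_fiberwise hup.1.1 (hs _ _ hup.1.1) hσus fun u hu =>
    ih u ⟨⟨us, hup.1.1, hu⟩, ?_⟩ (hinc.filter _) ?_
  · rintro rfl
    exact hup.1.2 (eq_singleton_of_rel_of_mem hb.1 hs hup.1.1 hu)
  · intro a ha
    obtain ⟨has, rfl⟩ := Multiset.mem_filter.1 ha
    exact hσ a has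

end Tree

/-- In a tree with root `rt`, any tuple of pairwise
`≤_d`-incomparable edges `e̲` can be completed to a broad relation
`e̲ f̲ ≤ rt`; consequently incomparability is inherited by descendants. -/
theorem stmt7 {X : Type u} (r : Rel X) (ht : IsTree r) (rt : X)
    (hrt : ∀ e, descends r e rt)
    (es : Multiset X) (hinc : es.Pairwise (Incomp r)) :
    (∃ fs, r (es + fs) rt) ∧
    (∀ e f e', Incomp r e f → descends r e' e → Incomp r e' f) := by
  classical
  obtain ⟨hb, hfin, hs, hln, -⟩ := ht
  have complete : ∀ es : Multiset X, es.Pairwise (Incomp r) → ∃ fs, r (es + fs) rt :=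
    fun es hinc => exists_add_rel_of_pairwise_incomp hb hs hln rt hinc fun a _ => hrt a
  refine ⟨complete es hinc, fun e f e' hef hde =>
    ⟨?_, fun hfe' => hef.2 (descends_trans hb.1 hfe' hde)⟩⟩
  obtain ⟨fs, hfs⟩ := complete {e, f} ⟨[e, f], rfl, by simpa using hef⟩
  obtain ⟨ks, hks, he'⟩ := hde
  have he'f : e' ≠ f := by
    rintro rfl
    exact hef.2 ⟨ks, hks, he'⟩
  exact not_descends_of_mem hb.1 hs (hb.1.rel_erase_add hfs (by simp) hks)
    (Multiset.mem_add.2 (Or.inr he')) (Multiset.mem_add.2 (Or.inl (by simp))) he'f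

end BroadPaper
end
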